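/- Under the hypotheses of the previous setup (Y orthonormal M×R, Y_n orthonormal R×n, P a selection matrix with PᵀY invertible, Y_α = Y Y_n), the least-squares interpolation operator satisfies ‖I - Y_α (PᵀY_α)† Pᵀ‖ ≤ ‖(PᵀY)^{-1}‖, provided Y_α (PᵀY_α)† Pᵀ is neither 0 nor I. -/

import Mathlib

open Matrix

noncomputable def specNorm {m n : ℕ} (A : Matrix (Fin m) (Fin n) ℝ) : ℝ :=
  ‖LinearMap.toContinuousLinearMap (Matrix.toEuclideanLin A)‖

/-- Moore–Penrose pseudo-inverse of a full-column-rank matrix: `A† = (AᵀA)⁻¹Aᵀ`. -/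
noncomputable def leftPinv {R n : ℕ} (A : Matrix (Fin R) (Fin n) ℝ) :
    Matrix (Fin n) (Fin R) ℝ :=
  (Aᵀ * A)⁻¹ * Aᵀ

/-! `Π := Y_α (PᵀY_α)† Pᵀ` is idempotent. For a nonzero idempotent `p` on a real inner product
space, `‖p‖ ≥ 1`, and writing `x = v + r` with `r = p x`, `v = x - p x`, the bounds
`‖r‖ ≤ ‖p‖ ‖t v + r‖` (all real `t`) say that a quadratic form in `(v, r)` is nonnegative; its
discriminant condition is symmetric under exchanging `v` and `r`, which gives
`‖v‖ ≤ ‖p‖ ‖v + r‖`, i.e. `‖1 - p‖ ≤ ‖p‖`. Finally `Y_n (PᵀY_α)† = (PᵀY)⁻¹ B B†` with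
`B = PᵀY_α`, and `B B†` is an orthogonal projector, so `‖Π‖ ≤ ‖Y‖ ‖(PᵀY)⁻¹‖ ‖Pᵀ‖ ≤ ‖(PᵀY)⁻¹‖`. -/

open scoped RealInnerProductSpace Matrix.Norms.L2Operator

theorem one_le_norm_of_isIdempotentElem {A : Type*} [NormedRing A] {p : A}
    (hp : IsIdempotentElem p) (hp0 : p ≠ 0) : 1 ≤ ‖p‖ := by
  have hpos : 0 < ‖p‖ := norm_pos_iff.mpr hp0
  have : ‖p‖ ≤ ‖p‖ * ‖p‖ := by simpa only [hp.eq] using norm_mul_le p p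
  nlinarith

theorem add_two_mul_add_nonneg_of_discrim_le_zero {A B C k : ℝ} (hk : 1 ≤ k) (hA : 0 ≤ A)
    (hB : 0 ≤ B) (h : discrim (k * A) (2 * k * C) ((k - 1) * B) ≤ 0) :
    0 ≤ (k - 1) * A + 2 * k * C + k * B := by
  rw [discrim] at h
  have hsq : (2 * k * C) ^ 2 ≤ ((k - 1) * A + k * B) ^ 2 := by
    nlinarith [sq_nonneg ((k - 1) * A - k * B)]
  have := (abs_le_of_sq_le_sq' hsq (by positivity)).1
  linarith

namespace ContinuousLinearMap

variable {E : Type*} [NormedAddCommGroup E] [InnerProductSpace ℝ E]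

theorem norm_one_sub_le_of_isIdempotentElem {p : E →L[ℝ] E} (hp : IsIdempotentElem p)
    (hp0 : p ≠ 0) : ‖1 - p‖ ≤ ‖p‖ := by
  have hk : 1 ≤ ‖p‖ ^ 2 := one_le_pow₀ (one_le_norm_of_isIdempotentElem hp hp0)
  refine opNorm_le_bound _ (norm_nonneg _) fun x => ?_
  set v := x - p x
  set r := p x
  have hpr : p r = r := DFunLike.congr_fun hp.eq x
  have hpv : p v = 0 := by rw [map_sub, hpr, sub_self]
  have hquad : ∀ t : ℝ, 0 ≤ (‖p‖ ^ 2 * ‖v‖ ^ 2) * (t * t) + (2 * ‖p‖ ^ 2 * ⟪v, r⟫) * t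
      + (‖p‖ ^ 2 - 1) * ‖r‖ ^ 2 := by
    intro t
    have hle : ‖r‖ ≤ ‖p‖ * ‖t • v + r‖ := by
      simpa [hpv, hpr] using p.le_opNorm (t • v + r)
    have hle_sq := pow_le_pow_left₀ (norm_nonneg _) hle 2
    rw [mul_pow, norm_add_sq_real, norm_smul, inner_smul_left, Real.norm_eq_abs, mul_pow,
      sq_abs] at hle_sq
    simp only [conj_trivial] at hle_sq
    nlinarith
  have hnonneg := add_two_mul_add_nonneg_of_discrim_le_zero hk (by positivity) (by positivity)
    (discrim_le_zero hquad)
  have hx : x = v + r := by simp [v, r]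
  have hsq : ‖v‖ ^ 2 ≤ (‖p‖ * ‖x‖) ^ 2 := by
    rw [mul_pow, hx, norm_add_sq_real]
    nlinarith
  simpa [v] using abs_le_of_sq_le_sq' hsq (by positivity) |>.2

end ContinuousLinearMap

namespace Matrix

theorem l2_opNorm_one_sub_le_of_isIdempotentElem {n : Type*} [Fintype n] [DecidableEq n]
    {p : Matrix n n ℝ} (hp : IsIdempotentElem p) (hp0 : p ≠ 0) : ‖1 - p‖ ≤ ‖p‖ := by
  simpa only [cstar_norm_def, map_sub, map_one] using
    ContinuousLinearMap.norm_one_sub_le_of_isIdempotentElem (hp.map toEuclideanCLM)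
      ((map_ne_zero_iff _ toEuclideanCLM.injective).mpr hp0)

theorem l2_opNorm_le_one_of_conjTranspose_mul_self_eq_one {𝕜 m n : Type*} [RCLike 𝕜]
    [Fintype m] [Fintype n] [DecidableEq n] {A : Matrix m n 𝕜} (h : Aᴴ * A = 1) : ‖A‖ ≤ 1 := by
  have hsq : ‖A‖ * ‖A‖ ≤ 1 := by
    rw [← l2_opNorm_conjTranspose_mul_self, h]
    exact IsStarProjection.norm_le _ (.one _)
  nlinarith [norm_nonneg A]

theorem transpose_mul_self_eq_one_of_injective {α m n : Type*} [NonAssocSemiring α] [Fintype m]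
    [DecidableEq m] [DecidableEq n] {η : n → m} (hη : Function.Injective η) {P : Matrix m n α}
    (hP : ∀ i j, P i j = if i = η j then 1 else 0) : Pᵀ * P = 1 := by
  ext j k
  simp [mul_apply, hP, one_apply, hη.eq_iff, eq_comm]

end Matrix

theorem specNorm_eq_l2_opNorm {m n : ℕ} (A : Matrix (Fin m) (Fin n) ℝ) : specNorm A = ‖A‖ := rfl

section LeftPinv

variable {M R n : ℕ}

/-- This holds also when `Bᵀ * B` is singular, since then `leftPinv B = 0`. -/
theorem leftPinv_mul_mul_leftPinv (B : Matrix (Fin R) (Fin n) ℝ) :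
    leftPinv B * B * leftPinv B = leftPinv B := by
  by_cases h : IsUnit (Bᵀ * B).det
  · rw [leftPinv, Matrix.mul_assoc _ Bᵀ B, nonsing_inv_mul _ h, Matrix.one_mul]
  · simp [leftPinv, nonsing_inv_apply_not_isUnit _ h]

theorem isStarProjection_mul_leftPinv (B : Matrix (Fin R) (Fin n) ℝ) :
    IsStarProjection (B * leftPinv B) where
  isIdempotentElem := by
    rw [IsIdempotentElem, Matrix.mul_assoc, ← Matrix.mul_assoc (leftPinv B),
      leftPinv_mul_mul_leftPinv]
  isSelfAdjoint := by
    rw [IsSelfAdjoint, star_eq_conjTranspose, conjTranspose_eq_transpose_of_trivial, leftPinv,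
      transpose_mul, transpose_mul, transpose_nonsing_inv, transpose_mul, transpose_transpose,
      Matrix.mul_assoc]

theorem isIdempotentElem_mul_leftPinv_mul (X : Matrix (Fin M) (Fin n) ℝ)
    (Z : Matrix (Fin R) (Fin M) ℝ) : IsIdempotentElem (X * leftPinv (Z * X) * Z) := by
  calc X * leftPinv (Z * X) * Z * (X * leftPinv (Z * X) * Z)
      = X * (leftPinv (Z * X) * (Z * X) * leftPinv (Z * X)) * Z := by
        simp only [Matrix.mul_assoc]
    _ = X * leftPinv (Z * X) * Z := by rw [leftPinv_mul_mul_leftPinv]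

theorem l2_opNorm_mul_mul_leftPinv_mul_le (Y : Matrix (Fin M) (Fin R) ℝ) (hY : Yᵀ * Y = 1)
    (Yn : Matrix (Fin R) (Fin n) ℝ) (P : Matrix (Fin M) (Fin R) ℝ) (hP : Pᵀ * P = 1)
    (hinv : IsUnit (Pᵀ * Y)) :
    ‖Y * Yn * leftPinv (Pᵀ * (Y * Yn)) * Pᵀ‖ ≤ ‖(Pᵀ * Y)⁻¹‖ := by
  set A := Pᵀ * Y
  set B := A * Yn
  have hfactor : Y * Yn * leftPinv (Pᵀ * (Y * Yn)) * Pᵀ = Y * A⁻¹ * (B * leftPinv B) * Pᵀ := by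
    have hYn : Yn = A⁻¹ * B :=
      (nonsing_inv_mul_cancel_left _ _ ((isUnit_iff_isUnit_det _).mp hinv)).symm
    rw [show Pᵀ * (Y * Yn) = B from (Matrix.mul_assoc _ _ _).symm]
    nth_rewrite 1 [hYn]
    simp only [Matrix.mul_assoc]
  have hYle : ‖Y‖ ≤ 1 := l2_opNorm_le_one_of_conjTranspose_mul_self_eq_one
    (by rwa [conjTranspose_eq_transpose_of_trivial])
  have hPle : ‖Pᵀ‖ ≤ 1 := by
    rw [← conjTranspose_eq_transpose_of_trivial, l2_opNorm_conjTranspose]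
    exact l2_opNorm_le_one_of_conjTranspose_mul_self_eq_one
      (by rwa [conjTranspose_eq_transpose_of_trivial])
  calc ‖Y * Yn * leftPinv (Pᵀ * (Y * Yn)) * Pᵀ‖
      ≤ ‖Y‖ * ‖A⁻¹‖ * ‖B * leftPinv B‖ * ‖Pᵀ‖ := by
        rw [hfactor]
        grw [l2_opNorm_mul, l2_opNorm_mul, l2_opNorm_mul]
    _ ≤ 1 * ‖A⁻¹‖ * 1 * 1 := by
        gcongr
        exact (isStarProjection_mul_leftPinv B).norm_le
    _ = ‖A⁻¹‖ := by ring

end LeftPinv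

theorem local_ls_interp_operator_bound_general {M R n : ℕ}
    (Y : Matrix (Fin M) (Fin R) ℝ) (hY : Yᵀ * Y = 1)
    (Yn : Matrix (Fin R) (Fin n) ℝ)
    (η : Fin R → Fin M) (hη : Function.Injective η)
    (P : Matrix (Fin M) (Fin R) ℝ)
    (hP : ∀ i j, P i j = if i = η j then 1 else 0)
    (hinv : IsUnit (Pᵀ * Y))
    (hne0 : (Y * Yn) * leftPinv (Pᵀ * (Y * Yn)) * Pᵀ ≠ 0) :
    specNorm ((1 : Matrix (Fin M) (Fin M) ℝ) -
        (Y * Yn) * leftPinv (Pᵀ * (Y * Yn)) * Pᵀ) ≤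
      specNorm ((Pᵀ * Y)⁻¹) := by
  rw [specNorm_eq_l2_opNorm, specNorm_eq_l2_opNorm]
  calc _ ≤ ‖(Y * Yn) * leftPinv (Pᵀ * (Y * Yn)) * Pᵀ‖ :=
        l2_opNorm_one_sub_le_of_isIdempotentElem (isIdempotentElem_mul_leftPinv_mul _ _) hne0
    _ ≤ ‖(Pᵀ * Y)⁻¹‖ := l2_opNorm_mul_mul_leftPinv_mul_le Y hY Yn P
        (transpose_mul_self_eq_one_of_injective hη hP) hinv

/-- The least-squares interpolation operator satisfies
`‖I - Y_α (PᵀY_α)† Pᵀ‖ ≤ ‖(PᵀY)⁻¹‖`, provided `Y_α (PᵀY_α)† Pᵀ` is a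
nontrivial projector (neither `0` nor `I`). Here `Y_α = Y Yₙ`. -/
theorem local_ls_interp_operator_bound {M R n : ℕ} (hMR : R ≤ M) (hRn : n ≤ R)
    (Y : Matrix (Fin M) (Fin R) ℝ) (hY : Yᵀ * Y = 1)
    (Yn : Matrix (Fin R) (Fin n) ℝ) (hYn : Ynᵀ * Yn = 1)
    (η : Fin R → Fin M) (hη : Function.Injective η)
    (P : Matrix (Fin M) (Fin R) ℝ)
    (hP : ∀ i j, P i j = if i = η j then 1 else 0)
    (hinv : IsUnit (Pᵀ * Y))
    (hne0 : (Y * Yn) * leftPinv (Pᵀ * (Y * Yn)) * Pᵀ ≠ 0)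
    (hneI : (Y * Yn) * leftPinv (Pᵀ * (Y * Yn)) * Pᵀ ≠ 1) :
    specNorm ((1 : Matrix (Fin M) (Fin M) ℝ) -
        (Y * Yn) * leftPinv (Pᵀ * (Y * Yn)) * Pᵀ) ≤
      specNorm ((Pᵀ * Y)⁻¹) :=
  local_ls_interp_operator_bound_general Y hY Yn η hη P hP hinv hne0
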